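/- arXiv:1608.01425 — 3 statements merged into one kernel-verified Lean document; each statement's English description precedes it below -/
import Mathlib

section
/- For a chain endomorphism φ_• of a cochain complex V_• of finite-dimensional vector spaces and any stretch S of V_•, the alternating sums Σ_{i∈S} (-1)^i tr(φ_i) and Σ_{i∈S} (-1)^i tr(φ_i^H) are equal, where φ_i^H is the induced map on H^i(V_•). -/
open CategoryTheory

/-- A *stretch* of a cochain complex `V` indexed by `ℤ` is a finite interval `[M, N]`
maximal with respect to the property that all differentials within it are nonzero. -/
def IsStretch {k : Type*} [Field k] (V : CochainComplex (ModuleCat k) ℤ)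
    (M N : ℤ) : Prop :=
  M ≤ N ∧ (∀ i : ℤ, M ≤ i → i < N → V.d i (i + 1) ≠ 0) ∧
    V.d (M - 1) M = 0 ∧ V.d N (N + 1) = 0

/-!
Write `Bⁱ = im dⁱ⁻¹ ⊆ Zⁱ = ker dⁱ ⊆ Vⁱ`; all three are `φ`-invariant, `Zⁱ/Bⁱ = Hⁱ` and
`dⁱ` identifies `Vⁱ/Zⁱ` with `Bⁱ⁺¹`. Since the trace is additive along invariant subspaces,
`tr φⁱ = tr φ|Bⁱ + tr φᴴⁱ + tr φ|Bⁱ⁺¹`. In the alternating sum over `[M, N]` the boundary terms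
telescope to `(-1)ᴹ tr φ|Bᴹ + (-1)ᴺ tr φ|Bᴺ⁺¹`, and both vanish because `dᴹ⁻¹ = 0` and `dᴺ = 0`.
-/

open LinearMap

namespace LinearMap

section

variable {R M N : Type*} [Semiring R] [AddCommMonoid M] [Module R M] [AddCommMonoid N]
  [Module R N] {g : M →ₗ[R] N} {a : M →ₗ[R] M} {b : N →ₗ[R] N}

theorem apply_mem_ker_of_comp_eq (h : g ∘ₗ a = b ∘ₗ g) : ∀ x ∈ ker g, a x ∈ ker g := by
  intro x hx
  rw [mem_ker, ← comp_apply, h, comp_apply, mem_ker.mp hx, map_zero]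

theorem apply_mem_range_of_comp_eq (h : g ∘ₗ a = b ∘ₗ g) : ∀ y ∈ range g, b y ∈ range g := by
  rintro _ ⟨x, rfl⟩
  exact ⟨a x, congr($h x)⟩

end

theorem trace_eq_of_comp_eq {R M N : Type*} [CommRing R] [AddCommGroup M] [Module R M]
    [AddCommGroup N] [Module R N] (e : M ≃ₗ[R] N) {a : M →ₗ[R] M} {b : N →ₗ[R] N}
    (h : e.toLinearMap ∘ₗ a = b ∘ₗ e.toLinearMap) : trace R M a = trace R N b := by
  rw [← trace_conj' a e]
  congr 1
  ext x
  simpa [LinearEquiv.conj_apply] using congr($h (e.symm x))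

variable {k M N : Type*} [Field k] [AddCommGroup M] [Module k M] [FiniteDimensional k M]
  [AddCommGroup N] [Module k N]

theorem trace_eq_trace_restrict_add_trace_mapQ (f : M →ₗ[k] M) (p : Submodule k M)
    (hp : ∀ x ∈ p, f x ∈ p) :
    trace k M f = trace k p (f.restrict hp) + trace k (M ⧸ p) (p.mapQ p f hp) := by
  obtain ⟨q, hpq⟩ := p.exists_isCompl
  have hsplit : f = p.subtype ∘ₗ (p.projectionOnto q hpq ∘ₗ f)
      + q.subtype ∘ₗ (q.projectionOnto p hpq.symm ∘ₗ f) := by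
    rw [← comp_assoc, ← comp_assoc, ← add_comp]
    exact (congrArg (· ∘ₗ f) (Submodule.projection_add_projection_eq_id hpq)).symm
  have hp' : p.projectionOnto q hpq ∘ₗ f ∘ₗ p.subtype = f.restrict hp := by
    ext x
    simp [Submodule.projectionOnto_apply_of_mem_left hpq (hp x x.2)]
  have hq' : q.projectionOnto p hpq.symm ∘ₗ f ∘ₗ q.subtype =
      (p.quotientEquivOfIsCompl q hpq).conj (p.mapQ p f hp) := by
    ext x
    simp [LinearEquiv.conj_apply]
  conv_lhs => rw [hsplit]
  rw [map_add, trace_comp_comm' _ p.subtype, trace_comp_comm' _ q.subtype, comp_assoc, comp_assoc,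
    hp', hq', trace_conj']

theorem trace_eq_trace_restrict_ker_add_trace_restrict_range {g : M →ₗ[k] N}
    {a : M →ₗ[k] M} {b : N →ₗ[k] N} (h : g ∘ₗ a = b ∘ₗ g) :
    trace k M a = trace k (ker g) (a.restrict (apply_mem_ker_of_comp_eq h)) +
      trace k (range g) (b.restrict (apply_mem_range_of_comp_eq h)) := by
  rw [trace_eq_trace_restrict_add_trace_mapQ a (ker g) (apply_mem_ker_of_comp_eq h)]
  congr 1
  refine trace_eq_of_comp_eq g.quotKerEquivRange ?_
  ext x
  exact congr($h x)

end LinearMap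

theorem ModuleCat.trace_hom_conj_iso {R : Type*} [CommRing R] {X Y : ModuleCat R} (e : X ≅ Y)
    (f : Y ⟶ Y) : trace R X (e.hom ≫ f ≫ e.inv).hom = trace R Y f.hom :=
  trace_conj' f.hom e.symm.toLinearEquiv

namespace CategoryTheory.ShortComplex

section

variable {R : Type*} [Ring R] {S₁ S₂ : ShortComplex (ModuleCat R)} (ψ : S₁ ⟶ S₂)

theorem f_hom_comp_τ₁_hom : S₂.f.hom ∘ₗ ψ.τ₁.hom = ψ.τ₂.hom ∘ₗ S₁.f.hom :=
  congr(($ψ.comm₁₂).hom)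

theorem g_hom_comp_τ₂_hom : S₂.g.hom ∘ₗ ψ.τ₂.hom = ψ.τ₃.hom ∘ₗ S₁.g.hom :=
  congr(($ψ.comm₂₃).hom)

end

variable {k : Type*} [Field k] {S : ShortComplex (ModuleCat k)} (ψ : S ⟶ S)

abbrev moduleCatCyclesEnd : ker S.g.hom →ₗ[k] ker S.g.hom :=
  ψ.τ₂.hom.restrict (apply_mem_ker_of_comp_eq (g_hom_comp_τ₂_hom ψ))

theorem moduleCatToCycles_comp_τ₁_hom :
    S.moduleCatToCycles ∘ₗ ψ.τ₁.hom = moduleCatCyclesEnd ψ ∘ₗ S.moduleCatToCycles := by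
  ext x
  exact congr($(f_hom_comp_τ₁_hom ψ) x)

theorem trace_homologyMap_eq_trace_mapQ :
    trace k S.homology (homologyMap ψ).hom =
      trace k (ker S.g.hom ⧸ range S.moduleCatToCycles)
        ((range S.moduleCatToCycles).mapQ _ (moduleCatCyclesEnd ψ)
          (apply_mem_range_of_comp_eq (moduleCatToCycles_comp_τ₁_hom ψ))) := by
  let γ : LeftHomologyMapData ψ S.moduleCatLeftHomologyData S.moduleCatLeftHomologyData := default
  rw [γ.homologyMap_eq, ModuleCat.trace_hom_conj_iso]
  -- the canonical `γ.φH` on `ker g ⧸ range f` is `mapQ` by construction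
  rfl

variable [FiniteDimensional k S.X₂]

theorem trace_moduleCatCyclesEnd :
    trace k (ker S.g.hom) (moduleCatCyclesEnd ψ) =
      trace k (range S.f.hom)
          (ψ.τ₂.hom.restrict (apply_mem_range_of_comp_eq (f_hom_comp_τ₁_hom ψ))) +
        trace k S.homology (homologyMap ψ).hom := by
  rw [trace_homologyMap_eq_trace_mapQ, trace_eq_trace_restrict_add_trace_mapQ _ _
    (apply_mem_range_of_comp_eq (moduleCatToCycles_comp_τ₁_hom ψ))]
  congr 1
  have hrange : (range S.moduleCatToCycles).map (ker S.g.hom).subtype = range S.f.hom := by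
    rw [← range_comp]
    exact congrArg range (subtype_comp_codRestrict _ _ _)
  refine trace_eq_of_comp_eq ((Submodule.equivMapOfInjective _ (ker S.g.hom).injective_subtype
    _).trans (LinearEquiv.ofEq _ _ hrange)) ?_
  ext x
  rfl

theorem trace_τ₂ :
    trace k S.X₂ ψ.τ₂.hom =
      trace k (range S.f.hom)
          (ψ.τ₂.hom.restrict (apply_mem_range_of_comp_eq (f_hom_comp_τ₁_hom ψ))) +
        trace k S.homology (homologyMap ψ).hom +
        trace k (range S.g.hom)
          (ψ.τ₃.hom.restrict (apply_mem_range_of_comp_eq (g_hom_comp_τ₂_hom ψ))) := by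
  rw [trace_eq_trace_restrict_ker_add_trace_restrict_range (g_hom_comp_τ₂_hom ψ),
    trace_moduleCatCyclesEnd]

end CategoryTheory.ShortComplex

theorem Int.sum_Icc_sub_add_one {G : Type*} [AddCommGroup G] (u : ℤ → G) {m n : ℤ}
    (hmn : m ≤ n) : ∑ i ∈ Finset.Icc m n, (u i - u (i + 1)) = u m - u (n + 1) := by
  induction n, hmn using Int.leInduction with
  | base => simp
  | succ n hmn ih =>
    rw [← Finset.insert_Icc_right_eq_Icc_add_one (by omega), Finset.sum_insert (by simp), ih]
    abel

namespace HomologicalComplex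

variable {ι : Type*} {c : ComplexShape ι}

theorem d_hom_comp_f_hom {R : Type*} [Ring R] {K L : HomologicalComplex (ModuleCat R) c}
    (φ : K ⟶ L) (i j : ι) : (L.d i j).hom ∘ₗ (φ.f i).hom = (φ.f j).hom ∘ₗ (K.d i j).hom :=
  congr(($(φ.comm i j)).hom)

variable {k : Type*} [Field k] {K : HomologicalComplex (ModuleCat k) c}

noncomputable def Hom.traceBoundaries (φ : K ⟶ K) (i j : ι) : k :=
  trace k (range (K.d i j).hom)
    ((φ.f j).hom.restrict (apply_mem_range_of_comp_eq (d_hom_comp_f_hom φ i j)))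

theorem Hom.traceBoundaries_eq_zero (φ : K ⟶ K) {i j : ι} (h : K.d i j = 0) :
    φ.traceBoundaries i j = 0 := by
  have : Subsingleton (range (K.d i j).hom) := by
    rw [Submodule.subsingleton_iff_eq_bot, range_eq_bot, h, ModuleCat.hom_zero]
  rw [Hom.traceBoundaries, Subsingleton.elim (LinearMap.restrict _ _) 0, map_zero]

theorem trace_f_eq (φ : K ⟶ K) (i : ι) [FiniteDimensional k (K.X i)] :
    trace k (K.X i) (φ.f i).hom =
      φ.traceBoundaries (c.prev i) i + trace k (K.homology i) (homologyMap φ i).hom +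
        φ.traceBoundaries i (c.next i) :=
  have : FiniteDimensional k (K.sc i).X₂ := ‹_›
  ShortComplex.trace_τ₂ ((shortComplexFunctor _ c i).map φ)

end HomologicalComplex

theorem CochainComplex.trace_f_eq {k : Type*} [Field k] {V : CochainComplex (ModuleCat k) ℤ}
    (φ : V ⟶ V) (i : ℤ) [FiniteDimensional k (V.X i)] :
    trace k (V.X i) (φ.f i).hom =
      φ.traceBoundaries (i - 1) i +
        trace k (V.homology i) (HomologicalComplex.homologyMap φ i).hom +
        φ.traceBoundaries i (i + 1) := by
  rw [HomologicalComplex.trace_f_eq, CochainComplex.prev, CochainComplex.next]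

/-- For any chain endomorphism and any stretch, the alternating trace sum over the
stretch equals the alternating trace sum on cohomology. -/
theorem stmt_6 {k : Type*} [Field k] (V : CochainComplex (ModuleCat k) ℤ)
    [∀ i : ℤ, FiniteDimensional k (V.X i)] (φ : V ⟶ V)
    (M N : ℤ) (hS : IsStretch V M N) :
    ∑ i ∈ Finset.Icc M N, (-1 : k) ^ i * LinearMap.trace k (V.X i) (φ.f i).hom =
      ∑ i ∈ Finset.Icc M N, (-1 : k) ^ i *
        LinearMap.trace k (V.homology i) (HomologicalComplex.homologyMap φ i).hom := by
  obtain ⟨hMN, -, hdM, hdN⟩ := hS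
  let u : ℤ → k := fun j ↦ (-1 : k) ^ j * φ.traceBoundaries (j - 1) j
  have hdegree : ∀ i, (-1 : k) ^ i * trace k (V.X i) (φ.f i).hom =
      (-1 : k) ^ i * trace k (V.homology i) (HomologicalComplex.homologyMap φ i).hom +
        (u i - u (i + 1)) := by
    intro i
    simp only [u, CochainComplex.trace_f_eq, add_sub_cancel_right,
      zpow_add_one₀ (by norm_num : (-1 : k) ≠ 0)]
    ring
  rw [Finset.sum_congr rfl fun i _ ↦ hdegree i, Finset.sum_add_distrib,
    Int.sum_Icc_sub_add_one u hMN]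
  simp [u, φ.traceBoundaries_eq_zero hdM, φ.traceBoundaries_eq_zero hdN]
end

section
/- Let V_• be a cochain complex of finite-dimensional vector spaces over a field k and let (T_i)_{i∈ℤ} be scalars such that for every stretch S of V_•, Σ_{i∈S} (-1)^i T_i = 0. Then there exists a null-homotopic chain map τ_• : V_• → V_• with tr(τ_i) = T_i for all i. -/
/-!
With homotopy components `S_{i+1} : V_{i+1} → V_i`, the map `τ = dS + Sd` has
`tr τ_i = c_{i-1} + c_i` where `c_i = tr (S_{i+1} d_i)`; this `c_i` can be any scalar when
`d_i ≠ 0` and must vanish when `d_i = 0`. So one needs `c` with `c_{i-1} + c_i = T_i` vanishing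
at the zeros of `d`. If `F` is a discrete antiderivative of `(-1)^i T_i`, then
`c_i = (-1)^i (F_i - C)` solves the recursion, and the stretch condition says exactly that `F`
takes equal values at consecutive zeros of `d`, hence one value `C` at all of them.
-/

open CategoryTheory

theorem Finset.sum_Ioc_sub_sub_one {G : Type*} [AddCommGroup G] (F : ℤ → G) {m n : ℤ}
    (hmn : m ≤ n) : ∑ i ∈ Finset.Ioc m n, (F i - F (i - 1)) = F n - F m := by
  induction n, hmn using Int.leInduction with
  | base => simp
  | succ n hmn ih =>
    rw [← Finset.insert_Ioc_right_eq_Ioc_add_one hmn, Finset.sum_insert (by simp), ih,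
      add_sub_cancel_right]
    abel

theorem Int.exists_sub_sub_one_eq {G : Type*} [AddCommGroup G] (f : ℤ → G) :
    ∃ F : ℤ → G, ∀ i, F i - F (i - 1) = f i := by
  let F (i : ℤ) : G := Int.inductionOn' (motive := fun _ => G) i 0 0
    (fun k _ x => x + f (k + 1)) (fun k _ x => x - f k)
  refine ⟨F, fun i => ?_⟩
  rcases le_or_gt 0 (i - 1) with hi | hi
  · have := Int.inductionOn'_add_one (motive := fun _ => G) (b := 0) (zero := 0)
      (succ := fun k _ x => x + f (k + 1)) (pred := fun k _ x => x - f k) hi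
    rw [sub_add_cancel] at this
    simp only [F, this, add_sub_cancel_left]
  · have := Int.inductionOn'_sub_one (motive := fun _ => G) (b := 0) (zero := 0)
      (succ := fun k _ x => x + f (k + 1)) (pred := fun k _ x => x - f k) (z := i) (by omega)
    simp only [F, this, sub_sub_cancel]

theorem Int.eq_of_mem_of_consecutive {α : Type*} {Z : Set ℤ} {F : ℤ → α}
    (hF : ∀ m ∈ Z, ∀ n ∈ Z, m < n → (∀ j, m < j → j < n → j ∉ Z) → F m = F n)
    {m n : ℤ} (hm : m ∈ Z) (hn : n ∈ Z) : F m = F n := by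
  wlog hmn : m ≤ n generalizing m n
  · exact (this hn hm (le_of_not_ge hmn)).symm
  have last : ∀ n, m ≤ n → ∃ l ∈ Z, l ≤ n ∧ F m = F l ∧ ∀ j, l < j → j ≤ n → j ∉ Z := by
    intro n hmn
    induction n, hmn using Int.leInduction with
    | base => exact ⟨m, hm, le_rfl, rfl, fun j h h' => by omega⟩
    | succ n _ ih =>
      obtain ⟨l, hl, hln, hFl, hgap⟩ := ih
      by_cases hn : n + 1 ∈ Z
      · refine ⟨n + 1, hn, le_rfl, hFl.trans (hF l hl _ hn (by omega) fun j h h' => ?_),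
          fun j h h' => by omega⟩
        exact hgap j h (by omega)
      · refine ⟨l, hl, by omega, hFl, fun j h h' => ?_⟩
        rcases h'.lt_or_eq with h' | rfl
        exacts [hgap j h (by omega), hn]
  obtain ⟨l, hl, hln, hFl, hgap⟩ := last n hmn
  obtain rfl : l = n := by
    by_contra hne
    exact hgap n (lt_of_le_of_ne hln hne) le_rfl hn
  exact hFl

theorem exists_pred_add_eq_of_sum_Ioc_eq_zero {K : Type*} [Field K] (Z : Set ℤ) (T : ℤ → K)
    (hT : ∀ m ∈ Z, ∀ n ∈ Z, m < n → (∀ j, m < j → j < n → j ∉ Z) →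
      ∑ i ∈ Finset.Ioc m n, (-1 : K) ^ i * T i = 0) :
    ∃ c : ℤ → K, (∀ i ∈ Z, c i = 0) ∧ ∀ i, c (i - 1) + c i = T i := by
  obtain ⟨F, hF⟩ := Int.exists_sub_sub_one_eq fun i => (-1 : K) ^ i * T i
  have hFZ : ∀ m ∈ Z, ∀ n ∈ Z, F m = F n := by
    refine fun m hm n hn => Int.eq_of_mem_of_consecutive (fun m hm n hn hmn hgap => ?_) hm hn
    rw [eq_comm, ← sub_eq_zero, ← Finset.sum_Ioc_sub_sub_one F hmn.le, ← hT m hm n hn hmn hgap]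
    exact Finset.sum_congr rfl fun i _ => hF i
  obtain ⟨C, hC⟩ : ∃ C, ∀ z ∈ Z, F z = C := by
    rcases Z.eq_empty_or_nonempty with rfl | ⟨z₀, hz₀⟩
    exacts [⟨0, by simp⟩, ⟨F z₀, fun z hz => hFZ z hz z₀ hz₀⟩]
  refine ⟨fun i => (-1 : K) ^ i * (F i - C), fun i hi => by simp [hC i hi], fun i => ?_⟩
  have hsq : (-1 : K) ^ i * (-1) ^ i = 1 := by rw [← mul_zpow]; norm_num
  simp only [zpow_sub_one₀ (by norm_num : (-1 : K) ≠ 0)]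
  linear_combination (-1 : K) ^ i * hF i + T i * hsq

theorem LinearMap.exists_trace_comp_eq {K M N : Type*} [Field K] [AddCommGroup M] [Module K M]
    [AddCommGroup N] [Module K N] [FiniteDimensional K M] {f : M →ₗ[K] N} (hf : f ≠ 0) (t : K) :
    ∃ S : N →ₗ[K] M, LinearMap.trace K M (S ∘ₗ f) = t := by
  obtain ⟨v, hv⟩ : ∃ v, f v ≠ 0 := by
    by_contra! h
    exact hf (LinearMap.ext h)
  obtain ⟨φ, hφ⟩ := Module.Projective.exists_dual_eq_one K hv
  refine ⟨φ.smulRight (t • v), ?_⟩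
  have : φ.smulRight (t • v) ∘ₗ f = (φ ∘ₗ f).smulRight (t • v) := rfl
  simp [this, hφ]

section CochainComplex

variable {K : Type*} [Field K] (V : CochainComplex (ModuleCat K) ℤ)

theorem IsStretch.of_consecutive {m n : ℤ} (hm : V.d m (m + 1) = 0) (hn : V.d n (n + 1) = 0)
    (hmn : m < n) (hgap : ∀ j, m < j → j < n → V.d j (j + 1) ≠ 0) : IsStretch V (m + 1) n :=
  ⟨hmn, fun j hj hjn => hgap j hj hjn, by rwa [add_sub_cancel_right], hn⟩

variable [∀ i, FiniteDimensional K (V.X i)]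

theorem exists_homotopy_family_trace_d_comp_eq (c : ℤ → K)
    (hc : ∀ i, V.d i (i + 1) = 0 → c i = 0) :
    ∃ h : ∀ i j, (ComplexShape.up ℤ).Rel j i → (V.X i ⟶ V.X j),
      ∀ i j (hji : (ComplexShape.up ℤ).Rel j i),
        LinearMap.trace K (V.X j) (V.d j i ≫ h i j hji).hom = c j := by
  suffices ∀ i j, (ComplexShape.up ℤ).Rel j i →
      ∃ S : V.X i ⟶ V.X j, LinearMap.trace K (V.X j) (V.d j i ≫ S).hom = c j by
    choose h hh using this
    exact ⟨h, hh⟩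
  rintro _ j rfl
  by_cases hd : V.d j (j + 1) = 0
  · exact ⟨0, by simp [hd, hc j hd]⟩
  · obtain ⟨S, hS⟩ := LinearMap.exists_trace_comp_eq
      (fun h => hd (ModuleCat.hom_ext (h.trans ModuleCat.hom_zero.symm))) (c j)
    exact ⟨ModuleCat.ofHom S, hS⟩

theorem trace_nullHomotopicMap'_f (h : ∀ i j, (ComplexShape.up ℤ).Rel j i → (V.X i ⟶ V.X j))
    (i : ℤ) :
    LinearMap.trace K (V.X i) ((Homotopy.nullHomotopicMap' h).f i).hom =
      LinearMap.trace K (V.X (i - 1))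
          (V.d (i - 1) i ≫ h i (i - 1) (ComplexShape.up_mk _ _ (sub_add_cancel i 1))).hom +
        LinearMap.trace K (V.X i)
          (V.d i (i + 1) ≫ h (i + 1) i (ComplexShape.up_mk _ _ rfl)).hom := by
  rw [Homotopy.nullHomotopicMap'_f (sub_add_cancel i 1) rfl, ModuleCat.hom_add, map_add,
    add_comm, ModuleCat.hom_comp, ModuleCat.hom_comp, LinearMap.trace_comp_comm']
  rfl

end CochainComplex

/-- Given scalars `T i` whose alternating sums over every stretch vanish, there is a
null-homotopic chain endomorphism `τ` with `tr (τ.f i) = T i` for all `i`. -/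
theorem stmt_10 {k : Type*} [Field k] (V : CochainComplex (ModuleCat k) ℤ)
    [∀ i : ℤ, FiniteDimensional k (V.X i)] (T : ℤ → k)
    (hT : ∀ M N : ℤ, IsStretch V M N →
      ∑ i ∈ Finset.Icc M N, (-1 : k) ^ i * T i = 0) :
    ∃ τ : V ⟶ V, Nonempty (Homotopy τ 0) ∧
      ∀ i : ℤ, LinearMap.trace k (V.X i) (τ.f i).hom = T i := by
  obtain ⟨c, hc_zero, hc_sum⟩ :=
    exists_pred_add_eq_of_sum_Ioc_eq_zero {i | V.d i (i + 1) = 0} T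
      fun m hm n hn hmn hgap => by
        simpa only [Finset.Icc_add_one_left_eq_Ioc] using
          hT _ _ (IsStretch.of_consecutive V hm hn hmn hgap)
  obtain ⟨h, hh⟩ := exists_homotopy_family_trace_d_comp_eq V c hc_zero
  refine ⟨Homotopy.nullHomotopicMap' h, ⟨Homotopy.nullHomotopy' h⟩, fun i => ?_⟩
  rw [trace_nullHomotopicMap'_f, hh, hh, hc_sum]
end

section
/- Over the field F_2, there do not exist 2×2 matrices p_1, q_1, s_1, t_1, p_2, q_2 with [[0,0],[1,0]] = p_1 q_1 - q_1 p_1, [[0,1],[0,0]] = s_1 t_1 - t_1 s_1, [[0,0],[1,0]] = p_2 q_2 - q_2 p_2, such that the three 4×4 matrices p_1 ⊗ I_2 - I_2 ⊗ s_1^T, q_2 ⊗ I_2 - I_2 ⊗ q_1^T, and p_2 ⊗ I_2 - I_2 ⊗ s_1^T are all invertible. -/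
open Matrix Kronecker

private lemma unit_inj {n : Type*} [Fintype n] [DecidableEq n]
    {M : Matrix n n (ZMod 2)} (h : IsUnit M) {v : n → ZMod 2}
    (hv : M *ᵥ v = 0) : v = 0 := by
  obtain ⟨u, rfl⟩ := h
  have h2 := congrArg (fun w => ((↑u⁻¹ : Matrix n n (ZMod 2))) *ᵥ w) hv
  simpa [Matrix.mulVec_mulVec,
    Matrix.nonsing_inv_mul _ (Matrix.isUnit_iff_isUnit_det _ |>.mp ⟨u, rfl⟩)] using h2

set_option maxHeartbeats 1000000 in
set_option synthInstance.maxHeartbeats 400000 in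
set_option synthInstance.maxSize 512 in
set_option maxRecDepth 8000 in
private lemma null1 : ∀ a b c x g y : ZMod 2, (a = x ∨ a = y ∨ c = x ∨ c = y) →
    ∃ v : Fin 2 × Fin 2 → ZMod 2, v ≠ 0 ∧
      ((!![a,0;b,c]) ⊗ₖ (1 : Matrix (Fin 2) (Fin 2) (ZMod 2)) -
        (1 : Matrix (Fin 2) (Fin 2) (ZMod 2)) ⊗ₖ (!![x,g;0,y])ᵀ) *ᵥ v = 0 := by
  decide

set_option maxHeartbeats 1000000 in
set_option synthInstance.maxHeartbeats 400000 in
set_option synthInstance.maxSize 512 in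
set_option maxRecDepth 8000 in
private lemma null2 : ∀ a b c x h y : ZMod 2, (a = x ∨ a = y ∨ c = x ∨ c = y) →
    ∃ v : Fin 2 × Fin 2 → ZMod 2, v ≠ 0 ∧
      ((!![a,0;b,c]) ⊗ₖ (1 : Matrix (Fin 2) (Fin 2) (ZMod 2)) -
        (1 : Matrix (Fin 2) (Fin 2) (ZMod 2)) ⊗ₖ (!![x,0;h,y])ᵀ) *ᵥ v = 0 := by
  decide

private lemma tr01 (p q : Matrix (Fin 2) (Fin 2) (ZMod 2))
    (h : !![0, 0; 1, 0] = p * q - q * p) : p 0 1 = 0 := by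
  have h2 := congrArg (fun m => Matrix.trace (p * m)) h
  simp only [Matrix.mul_sub, Matrix.trace_sub, ← Matrix.mul_assoc] at h2
  rw [Matrix.trace_mul_cycle p q p] at h2
  simp only [sub_self] at h2
  simpa [Matrix.trace_fin_two, Matrix.mul_apply, Fin.sum_univ_two] using h2

private lemma tr01' (p q : Matrix (Fin 2) (Fin 2) (ZMod 2))
    (h : !![0, 0; 1, 0] = p * q - q * p) : q 0 1 = 0 := by
  have h2 := congrArg (fun m => Matrix.trace (q * m)) h
  simp only [Matrix.mul_sub, Matrix.trace_sub, ← Matrix.mul_assoc] at h2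
  rw [Matrix.trace_mul_cycle q p q] at h2
  simp only [sub_self] at h2
  simpa [Matrix.trace_fin_two, Matrix.mul_apply, Fin.sum_univ_two] using h2

private lemma tr10 (s t : Matrix (Fin 2) (Fin 2) (ZMod 2))
    (h : !![0, 1; 0, 0] = s * t - t * s) : s 1 0 = 0 := by
  have h2 := congrArg (fun m => Matrix.trace (s * m)) h
  simp only [Matrix.mul_sub, Matrix.trace_sub, ← Matrix.mul_assoc] at h2
  rw [Matrix.trace_mul_cycle s t s] at h2
  simp only [sub_self] at h2
  simpa [Matrix.trace_fin_two, Matrix.mul_apply, Fin.sum_univ_two] using h2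

set_option synthInstance.maxSize 512 in
set_option maxRecDepth 8000 in
private lemma scalar_contra : ∀ a b c d e f x y A C : ZMod 2,
    (1 : ZMod 2) = b * d + c * e - (e * a + f * b) →
    ¬(a = x ∨ a = y ∨ c = x ∨ c = y) →
    ¬(A = d ∨ A = f ∨ C = d ∨ C = f) → False := by
  decide

/-- **Failure of Lemma A over `𝔽₂`**: there are no matrices `p₁, q₁, s₁, t₁, p₂, q₂`
writing `[[0,0],[1,0]]`, `[[0,1],[0,0]]`, `[[0,0],[1,0]]` as commutators such that the
three associated Kronecker matrices are all invertible. -/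
theorem stmt_14 :
    ¬ ∃ p₁ q₁ s₁ t₁ p₂ q₂ : Matrix (Fin 2) (Fin 2) (ZMod 2),
      !![0, 0; 1, 0] = p₁ * q₁ - q₁ * p₁ ∧
      !![0, 1; 0, 0] = s₁ * t₁ - t₁ * s₁ ∧
      !![0, 0; 1, 0] = p₂ * q₂ - q₂ * p₂ ∧
      IsUnit (p₁ ⊗ₖ (1 : Matrix (Fin 2) (Fin 2) (ZMod 2)) -
        (1 : Matrix (Fin 2) (Fin 2) (ZMod 2)) ⊗ₖ s₁ᵀ) ∧
      IsUnit (q₂ ⊗ₖ (1 : Matrix (Fin 2) (Fin 2) (ZMod 2)) -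
        (1 : Matrix (Fin 2) (Fin 2) (ZMod 2)) ⊗ₖ q₁ᵀ) ∧
      IsUnit (p₂ ⊗ₖ (1 : Matrix (Fin 2) (Fin 2) (ZMod 2)) -
        (1 : Matrix (Fin 2) (Fin 2) (ZMod 2)) ⊗ₖ s₁ᵀ) := by
  rintro ⟨p₁, q₁, s₁, t₁, p₂, q₂, eq1, eq2, eq3, u1, u2, u3⟩
  have hp₁ : p₁ 0 1 = 0 := tr01 _ _ eq1
  have hq₁ : q₁ 0 1 = 0 := tr01' _ _ eq1
  have hs₁ : s₁ 1 0 = 0 := tr10 _ _ eq2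
  have hq₂ : q₂ 0 1 = 0 := tr01' _ _ eq3
  -- rewrite matrices in explicit form
  have ep₁ : p₁ = !![p₁ 0 0, 0; p₁ 1 0, p₁ 1 1] := by ext i j; fin_cases i <;> fin_cases j <;> simp [hp₁]
  have eq₁' : q₁ = !![q₁ 0 0, 0; q₁ 1 0, q₁ 1 1] := by ext i j; fin_cases i <;> fin_cases j <;> simp [hq₁]
  have es₁ : s₁ = !![s₁ 0 0, s₁ 0 1; 0, s₁ 1 1] := by ext i j; fin_cases i <;> fin_cases j <;> simp [hs₁]
  have eq₂' : q₂ = !![q₂ 0 0, 0; q₂ 1 0, q₂ 1 1] := by ext i j; fin_cases i <;> fin_cases j <;> simp [hq₂]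
  -- spectral disjointness from unit hypotheses
  have d1 : ¬(p₁ 0 0 = s₁ 0 0 ∨ p₁ 0 0 = s₁ 1 1 ∨ p₁ 1 1 = s₁ 0 0 ∨ p₁ 1 1 = s₁ 1 1) := by
    intro h
    obtain ⟨v, hv0, hv⟩ := null1 (p₁ 0 0) (p₁ 1 0) (p₁ 1 1) (s₁ 0 0) (s₁ 0 1) (s₁ 1 1) h
    rw [← ep₁, ← es₁] at hv
    exact hv0 (unit_inj u1 hv)
  have d2 : ¬(q₂ 0 0 = q₁ 0 0 ∨ q₂ 0 0 = q₁ 1 1 ∨ q₂ 1 1 = q₁ 0 0 ∨ q₂ 1 1 = q₁ 1 1) := by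
    intro h
    obtain ⟨v, hv0, hv⟩ := null2 (q₂ 0 0) (q₂ 1 0) (q₂ 1 1) (q₁ 0 0) (q₁ 1 0) (q₁ 1 1) h
    rw [← eq₂', ← eq₁'] at hv
    exact hv0 (unit_inj u2 hv)
  -- the (1,0) entry of the first commutator equation
  have e10 := congrFun (congrFun eq1 1) 0
  simp [Matrix.sub_apply, Matrix.mul_apply, Fin.sum_univ_two] at e10
  exact scalar_contra (p₁ 0 0) (p₁ 1 0) (p₁ 1 1) (q₁ 0 0) (q₁ 1 0) (q₁ 1 1)
    (s₁ 0 0) (s₁ 1 1) (q₂ 0 0) (q₂ 1 1) (by linear_combination e10) d1 d2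
end
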